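/- (Algebraic content of Corollary 3) Suppose there exists a matrix B₁ ∈ ℝ^{K×J} such that x_i = B₁ w_i for all i. Then: (a) V_xw γ̃ = V_xτ, where γ̃ = V_ww⁻¹ V_wτ; equivalently, under complete randomization, Cov(τ̂_x, τ̂ − γ̃ᵀτ̂_w) = 0; and (b) V_ττ − V_τx V_xx⁻¹ V_xτ = (V_ττ − V_τw V_ww⁻¹ V_wτ) + γ̃ᵀ (V_ww − V_wx V_xx⁻¹ V_xw) γ̃. Part (a) expresses R²_proj = 1 and γ̃_proj = γ̃_res = γ̃, and part (b) expresses R²_res = (R²_{τ,w} − R²_{τ,x})/(1 − R²_{τ,x}) in Corollary 3. -/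

import Mathlib

/-!
Since `x_i = B₁ w_i`, every moment involving `x` factors through `w`: `V_wx = V_ww B₁ᵀ` and
`V_xτ = B₁ V_wτ`. Hence (a) is `V_xw γ̃ = B₁ V_ww γ̃ = B₁ V_wτ`, and (b) is the identity
`γ̃ᵀ (V_ww − V_wx M V_xw) γ̃ = V_τw γ̃ − V_τx M V_xτ`, valid for every `M` once `V_ww γ̃ = V_wτ`.

For the covariance form, `τ̂ − γ̃ᵀ τ̂_w` is the difference in means of the adjusted outcomes
`Y_i(z) − γ̃ᵀ w_i`. Under complete randomization `∑_{i ∈ S} b_i` has mean zero and is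
uncorrelated with `∑_{i ∈ S} a_i` as soon as `∑ b_i = 0` and `∑ a_i b_i = 0`, because the number
of assignments containing both `i` and `j` only depends on whether `i = j`; for the adjusted
outcomes that orthogonality is (a) once more.
-/

open Finset Matrix

noncomputable section

/-- The set of possible complete-randomization treatment assignments:
subsets of `{1,…,n}` of size `n₁` (the treated units). -/
def Omega (n n₁ : ℕ) : Finset (Finset (Fin n)) :=
  Finset.powersetCard n₁ Finset.univ

/-- Expectation under complete randomization (uniform over `Omega n n₁`). -/
def crE (n n₁ : ℕ) (f : Finset (Fin n) → ℝ) : ℝ :=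
  (∑ s ∈ Omega n n₁, f s) / ((Omega n n₁).card : ℝ)

/-- Variance under complete randomization. -/
def crVar (n n₁ : ℕ) (f : Finset (Fin n) → ℝ) : ℝ :=
  crE n n₁ fun s => (f s - crE n n₁ f) ^ 2

/-- Covariance under complete randomization. -/
def crCov (n n₁ : ℕ) (f g : Finset (Fin n) → ℝ) : ℝ :=
  crE n n₁ fun s => (f s - crE n n₁ f) * (g s - crE n n₁ g)

/-- Difference-in-means estimator `τ̂` of the average treatment effect. -/
def tauHat (n n₁ n₀ : ℕ) (Y1 Y0 : Fin n → ℝ) (s : Finset (Fin n)) : ℝ :=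
  (n₁ : ℝ)⁻¹ * ∑ i, (if i ∈ s then Y1 i else 0)
    - (n₀ : ℝ)⁻¹ * ∑ i, (if i ∈ s then 0 else Y0 i)

/-- Difference-in-means `τ̂_w` of a covariate vector. -/
def tauHatVec (n n₁ n₀ J : ℕ) (w : Fin n → Fin J → ℝ) (s : Finset (Fin n)) :
    Fin J → ℝ := fun j =>
  (n₁ : ℝ)⁻¹ * ∑ i, (if i ∈ s then w i j else 0)
    - (n₀ : ℝ)⁻¹ * ∑ i, (if i ∈ s then 0 else w i j)

/-- Finite-population mean. -/
def popMean (n : ℕ) (Y : Fin n → ℝ) : ℝ := (n : ℝ)⁻¹ * ∑ i, Y i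

/-- Finite-population variance `S²_Y`. -/
def popVar (n : ℕ) (Y : Fin n → ℝ) : ℝ :=
  ((n : ℝ) - 1)⁻¹ * ∑ i, (Y i - popMean n Y) ^ 2

/-- Finite-population covariance `S_{w,Y}` between centered covariates and an outcome. -/
def covVec (n J : ℕ) (w : Fin n → Fin J → ℝ) (Y : Fin n → ℝ) : Fin J → ℝ := fun j =>
  ((n : ℝ) - 1)⁻¹ * ∑ i, w i j * (Y i - popMean n Y)

/-- Finite-population covariance matrix `S_{w,x}` between two sets of centered covariates. -/
def covMat (n J K : ℕ) (w : Fin n → Fin J → ℝ) (x : Fin n → Fin K → ℝ) :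
    Matrix (Fin J) (Fin K) ℝ :=
  Matrix.of fun j k => ((n : ℝ) - 1)⁻¹ * ∑ i, w i j * x i k

/-- `V_ττ = r₁⁻¹ S²_{Y(1)} + r₀⁻¹ S²_{Y(0)} − S²_τ`. -/
def Vtt (n n₁ n₀ : ℕ) (Y1 Y0 : Fin n → ℝ) : ℝ :=
  ((n₁ : ℝ) / n)⁻¹ * popVar n Y1 + ((n₀ : ℝ) / n)⁻¹ * popVar n Y0
    - popVar n (fun i => Y1 i - Y0 i)

/-- `V_wτ = r₁⁻¹ S_{w,Y(1)} + r₀⁻¹ S_{w,Y(0)}`. -/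
def VvecTau (n n₁ n₀ J : ℕ) (w : Fin n → Fin J → ℝ) (Y1 Y0 : Fin n → ℝ) :
    Fin J → ℝ :=
  ((n₁ : ℝ) / n)⁻¹ • covVec n J w Y1 + ((n₀ : ℝ) / n)⁻¹ • covVec n J w Y0

/-- `V_wx = (r₁ r₀)⁻¹ S_{w,x}` (covariance blocks of the matrix `V`). -/
def Vmat (n n₁ n₀ J K : ℕ) (w : Fin n → Fin J → ℝ) (x : Fin n → Fin K → ℝ) :
    Matrix (Fin J) (Fin K) ℝ :=
  (((n₁ : ℝ) / n) * ((n₀ : ℝ) / n))⁻¹ • covMat n J K w x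

section Counting

variable {α β : Type*} [Fintype α] [DecidableEq α]

lemma card_filter_powersetCard_univ_superset (k : ℕ) (t : Finset α) :
    #{s ∈ powersetCard k univ | t ⊆ s} =
      if #t ≤ k then (Fintype.card α - #t).choose (k - #t) else 0 := by
  split_ifs with h
  · rw [card_filter_powersetCard_subset t univ k (subset_univ t) h, card_univ]
  · rw [card_eq_zero, filter_eq_empty_iff]
    exact fun s hs hts => h ((card_le_card hts).trans (mem_powersetCard.1 hs).2.le)

lemma sum_sum_mem_eq_sum_card_mul (S : Finset β) (t : β → Finset α) (f : α → ℝ) :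
    ∑ s ∈ S, ∑ i ∈ t s, f i = ∑ i, #{s ∈ S | i ∈ t s} * f i := by
  rw [sum_comm' (t' := univ) (s' := fun i => {s ∈ S | i ∈ t s}) (by simp)]
  simp

lemma sum_powersetCard_sum_eq_zero (k : ℕ) {a : α → ℝ} (ha : ∑ i, a i = 0) :
    ∑ s ∈ powersetCard k univ, ∑ i ∈ s, a i = 0 := by
  have hcount (i : α) : #{s ∈ powersetCard k univ | i ∈ s} =
      if 1 ≤ k then (Fintype.card α - 1).choose (k - 1) else 0 := by
    simpa using card_filter_powersetCard_univ_superset k {i}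
  simp only [sum_sum_mem_eq_sum_card_mul, hcount, ← mul_sum, ha, mul_zero]

lemma sum_powersetCard_sum_mul_sum_eq_zero (k : ℕ) {a b : α → ℝ} (hb : ∑ i, b i = 0)
    (hab : ∑ i, a i * b i = 0) :
    ∑ s ∈ powersetCard k univ, (∑ i ∈ s, a i) * (∑ i ∈ s, b i) = 0 := by
  set N : ℕ → ℝ := fun m => if m ≤ k then ((Fintype.card α - m).choose (k - m) : ℝ) else 0
  have hcount (i j : α) : (#{s ∈ powersetCard k univ | (i, j) ∈ s ×ˢ s} : ℝ) =
      N 2 + if i = j then N 1 - N 2 else 0 := by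
    have := card_filter_powersetCard_univ_superset k {i, j}
    simp only [insert_subset_iff, singleton_subset_iff] at this
    by_cases hij : i = j
    · subst hij; simp_all [N]
    · simp_all [N, card_pair hij]
  calc ∑ s ∈ powersetCard k univ, (∑ i ∈ s, a i) * (∑ i ∈ s, b i)
      = ∑ s ∈ powersetCard k univ, ∑ p ∈ s ×ˢ s, a p.1 * b p.2 := by
        simp only [sum_mul_sum, sum_product]
    _ = ∑ i, ∑ j, (N 2 + if i = j then N 1 - N 2 else 0) * (a i * b j) := by
        rw [sum_sum_mem_eq_sum_card_mul, Fintype.sum_prod_type]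
        simp only [hcount]
    _ = (N 1 - N 2) * ∑ i, a i * b i := by
        simp only [add_mul, sum_add_distrib, ite_mul, zero_mul, sum_ite_eq, mem_univ, if_true,
          ← mul_sum, hb, mul_zero, zero_add]
    _ = 0 := by rw [hab, mul_zero]

end Counting

section Randomization

variable {n : ℕ}

lemma crCov_sum_mem_eq_zero (n₁ : ℕ) {a b : Fin n → ℝ} (e : ℝ) (hb : ∑ i, b i = 0)
    (hab : ∑ i, a i * b i = 0) :
    crCov n n₁ (fun s => ∑ i ∈ s, b i) (fun s => ∑ i ∈ s, a i - e) = 0 := by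
  have hmean : crE n n₁ (fun s => ∑ i ∈ s, b i) = 0 := by
    rw [crE, Omega, sum_powersetCard_sum_eq_zero n₁ hb, zero_div]
  have hterm (μ : ℝ) (s : Finset (Fin n)) : (∑ i ∈ s, b i) * (∑ i ∈ s, a i - e - μ) =
      (∑ i ∈ s, a i) * (∑ i ∈ s, b i) - (e + μ) * ∑ i ∈ s, b i := by ring
  rw [crCov, hmean, crE, Omega]
  simp only [sub_zero, hterm, sum_sub_distrib, ← mul_sum,
    sum_powersetCard_sum_mul_sum_eq_zero n₁ hb hab, sum_powersetCard_sum_eq_zero n₁ hb, mul_zero,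
    zero_div]

variable {n₁ n₀ : ℕ}

lemma tauHat_eq_sum_mem (Y1 Y0 : Fin n → ℝ) (s : Finset (Fin n)) :
    tauHat n n₁ n₀ Y1 Y0 s =
      ∑ i ∈ s, ((n₁ : ℝ)⁻¹ * Y1 i + (n₀ : ℝ)⁻¹ * Y0 i) - (n₀ : ℝ)⁻¹ * ∑ i, Y0 i := by
  have hcompl (i : Fin n) : (if i ∈ s then 0 else Y0 i) = Y0 i - if i ∈ s then Y0 i else 0 := by
    split_ifs <;> simp
  simp only [tauHat, hcompl, sum_sub_distrib, sum_ite_mem, univ_inter, sum_add_distrib, ← mul_sum]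
  ring

lemma tauHat_sub_dotProduct_tauHatVec {J : ℕ} (Y1 Y0 : Fin n → ℝ) (w : Fin n → Fin J → ℝ)
    (γ : Fin J → ℝ) (s : Finset (Fin n)) :
    tauHat n n₁ n₀ Y1 Y0 s - γ ⬝ᵥ tauHatVec n n₁ n₀ J w s =
      tauHat n n₁ n₀ (fun i => Y1 i - γ ⬝ᵥ w i) (fun i => Y0 i - γ ⬝ᵥ w i) s := by
  have hvec (j : Fin J) : tauHatVec n n₁ n₀ J w s j =
      tauHat n n₁ n₀ (fun i => w i j) (fun i => w i j) s := rfl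
  simp only [dotProduct, hvec, tauHat_eq_sum_mem, mul_sub, mul_add, sum_sub_distrib,
    sum_add_distrib, mul_sum]
  rw [sum_comm (γ := Fin J), sum_comm (γ := Fin J), sum_comm (γ := Fin J)]
  ring_nf

lemma crCov_tauHat_eq_zero {a Y1 Y0 : Fin n → ℝ} (ha : ∑ i, a i = 0)
    (horth : ∑ i, ((n₁ : ℝ)⁻¹ * Y1 i + (n₀ : ℝ)⁻¹ * Y0 i) * a i = 0) :
    crCov n n₁ (tauHat n n₁ n₀ a a) (tauHat n n₁ n₀ Y1 Y0) = 0 := by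
  have hterm (u : ℝ) (i : Fin n) : u * ((n₁ : ℝ)⁻¹ * a i + (n₀ : ℝ)⁻¹ * a i) =
      ((n₁ : ℝ)⁻¹ + (n₀ : ℝ)⁻¹) * (u * a i) := by ring
  simp only [funext (tauHat_eq_sum_mem (n₁ := n₁) (n₀ := n₀) _ _), ha, mul_zero, sub_zero]
  apply crCov_sum_mem_eq_zero
  · simp only [sum_add_distrib, ← mul_sum, ha, mul_zero, add_zero]
  · simp only [hterm, ← mul_sum, horth, mul_zero]

end Randomization

section Moments

variable {n n₁ n₀ J K L : ℕ}

lemma covMat_transpose (w : Fin n → Fin J → ℝ) (x : Fin n → Fin K → ℝ) :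
    (covMat n J K w x)ᵀ = covMat n K J x w := by
  ext k j
  simp only [covMat, transpose_apply, of_apply, mul_comm (w _ _)]

lemma covMat_mulVec_right (w : Fin n → Fin J → ℝ) (x : Fin n → Fin K → ℝ)
    (B : Matrix (Fin L) (Fin K) ℝ) :
    covMat n J L w (fun i => B *ᵥ x i) = covMat n J K w x * Bᵀ := by
  ext j l
  simp only [covMat, of_apply, mul_apply, transpose_apply, mulVec, dotProduct, mul_sum, sum_mul]
  rw [sum_comm]
  exact sum_congr rfl fun _ _ => sum_congr rfl fun _ _ => by ring

lemma covVec_mulVec (w : Fin n → Fin J → ℝ) (B : Matrix (Fin L) (Fin J) ℝ) (Y : Fin n → ℝ) :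
    covVec n L (fun i => B *ᵥ w i) Y = B *ᵥ covVec n J w Y := by
  ext l
  simp only [covVec, mulVec, dotProduct, mul_sum, sum_mul]
  rw [sum_comm]
  exact sum_congr rfl fun _ _ => sum_congr rfl fun _ _ => by ring

lemma covVec_apply_of_sum_eq_zero {x : Fin n → Fin K → ℝ} {k : Fin K} (hx : ∑ i, x i k = 0)
    (Y : Fin n → ℝ) : covVec n K x Y k = ((n : ℝ) - 1)⁻¹ * ∑ i, x i k * Y i := by
  simp only [covVec, mul_sub, sum_sub_distrib, ← sum_mul, hx, zero_mul, sub_zero]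

lemma covMat_mulVec_apply (x : Fin n → Fin K → ℝ) (w : Fin n → Fin J → ℝ) (γ : Fin J → ℝ)
    (k : Fin K) : (covMat n K J x w *ᵥ γ) k = ((n : ℝ) - 1)⁻¹ * ∑ i, x i k * (γ ⬝ᵥ w i) := by
  simp only [covMat, mulVec, dotProduct, of_apply, mul_sum, sum_mul]
  rw [sum_comm]
  exact sum_congr rfl fun _ _ => sum_congr rfl fun _ _ => by ring

lemma Vmat_transpose (w : Fin n → Fin J → ℝ) (x : Fin n → Fin K → ℝ) :
    (Vmat n n₁ n₀ J K w x)ᵀ = Vmat n n₁ n₀ K J x w := by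
  rw [Vmat, Vmat, transpose_smul, covMat_transpose]

lemma Vmat_mulVec_right (w : Fin n → Fin J → ℝ) (x : Fin n → Fin K → ℝ)
    (B : Matrix (Fin L) (Fin K) ℝ) :
    Vmat n n₁ n₀ J L w (fun i => B *ᵥ x i) = Vmat n n₁ n₀ J K w x * Bᵀ := by
  rw [Vmat, Vmat, covMat_mulVec_right, smul_mul]

lemma VvecTau_mulVec (w : Fin n → Fin J → ℝ) (B : Matrix (Fin L) (Fin J) ℝ)
    (Y1 Y0 : Fin n → ℝ) :
    VvecTau n n₁ n₀ L (fun i => B *ᵥ w i) Y1 Y0 = B *ᵥ VvecTau n n₁ n₀ J w Y1 Y0 := by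
  rw [VvecTau, VvecTau, covVec_mulVec, covVec_mulVec, mulVec_add, mulVec_smul, mulVec_smul]

lemma isUnit_det_Vmat (hn : n ≠ 0) (hn₁ : n₁ ≠ 0) (hn₀ : n₀ ≠ 0) {w : Fin n → Fin J → ℝ}
    (hw : IsUnit (covMat n J J w w).det) : IsUnit (Vmat n n₁ n₀ J J w w).det := by
  rw [Vmat, det_smul]
  exact (IsUnit.pow _ (Ne.isUnit (by simp [hn, hn₁, hn₀]))).mul hw

lemma VvecTau_apply_of_sum_eq_zero {x : Fin n → Fin K → ℝ} {k : Fin K} (hx : ∑ i, x i k = 0)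
    (Y1 Y0 : Fin n → ℝ) :
    VvecTau n n₁ n₀ K x Y1 Y0 k =
      n * ((n : ℝ) - 1)⁻¹ * ∑ i, ((n₁ : ℝ)⁻¹ * Y1 i + (n₀ : ℝ)⁻¹ * Y0 i) * x i k := by
  simp only [VvecTau, Pi.add_apply, Pi.smul_apply, smul_eq_mul, covVec_apply_of_sum_eq_zero hx,
    inv_div, mul_sum, ← sum_add_distrib]
  refine sum_congr rfl fun i _ => ?_
  ring

lemma VvecTau_sub_dotProduct (hsum : n₁ + n₀ = n) (hn₁ : n₁ ≠ 0) (hn₀ : n₀ ≠ 0)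
    {x : Fin n → Fin K → ℝ} (hx : ∀ k, ∑ i, x i k = 0) (Y1 Y0 : Fin n → ℝ)
    (w : Fin n → Fin J → ℝ) (γ : Fin J → ℝ) :
    VvecTau n n₁ n₀ K x (fun i => Y1 i - γ ⬝ᵥ w i) (fun i => Y0 i - γ ⬝ᵥ w i) =
      VvecTau n n₁ n₀ K x Y1 Y0 - (Vmat n n₁ n₀ J K w x)ᵀ *ᵥ γ := by
  have hscalar : (((n₁ : ℝ) / n) * ((n₀ : ℝ) / n))⁻¹ = n * ((n₁ : ℝ)⁻¹ + (n₀ : ℝ)⁻¹) := by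
    rw [← hsum]
    push_cast
    field_simp
    ring
  have hterm (i : Fin n) (k : Fin K) :
      ((n₁ : ℝ)⁻¹ * (Y1 i - γ ⬝ᵥ w i) + (n₀ : ℝ)⁻¹ * (Y0 i - γ ⬝ᵥ w i)) * x i k =
        ((n₁ : ℝ)⁻¹ * Y1 i + (n₀ : ℝ)⁻¹ * Y0 i) * x i k
          - ((n₁ : ℝ)⁻¹ + (n₀ : ℝ)⁻¹) * (x i k * (γ ⬝ᵥ w i)) := by ring
  ext k
  rw [Pi.sub_apply, VvecTau_apply_of_sum_eq_zero (hx k), VvecTau_apply_of_sum_eq_zero (hx k),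
    Vmat_transpose, Vmat, smul_mulVec, Pi.smul_apply, covMat_mulVec_apply, hscalar]
  simp only [hterm, sum_sub_distrib, ← mul_sum, smul_eq_mul]
  ring

end Moments

lemma dotProduct_sub_mul_mulVec {m l R : Type*} [Fintype m] [Fintype l] [CommRing R]
    {W : Matrix m m R} (hW : Wᵀ = W) (B : Matrix l m R) (M : Matrix l l R) {γ v : m → R}
    (hγ : W *ᵥ γ = v) :
    γ ⬝ᵥ ((W - W * Bᵀ * M * (W * Bᵀ)ᵀ) *ᵥ γ) = v ⬝ᵥ γ - (B *ᵥ v) ⬝ᵥ (M *ᵥ (B *ᵥ v)) := by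
  have hBv : (W * Bᵀ)ᵀ *ᵥ γ = B *ᵥ v := by
    rw [transpose_mul, transpose_transpose, hW, ← mulVec_mulVec, hγ]
  calc γ ⬝ᵥ ((W - W * Bᵀ * M * (W * Bᵀ)ᵀ) *ᵥ γ)
      = γ ⬝ᵥ (W *ᵥ γ) - γ ᵥ* (W * Bᵀ) ⬝ᵥ (M *ᵥ ((W * Bᵀ)ᵀ *ᵥ γ)) := by
        rw [sub_mulVec, dotProduct_sub, ← mulVec_mulVec, ← mulVec_mulVec,
          dotProduct_mulVec γ (W * Bᵀ)]
    _ = v ⬝ᵥ γ - (B *ᵥ v) ⬝ᵥ (M *ᵥ (B *ᵥ v)) := by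
        rw [← mulVec_transpose, hBv, hγ, dotProduct_comm]

theorem statement11_general (n n₁ n₀ J K : ℕ) (hn : 2 ≤ n) (hn₁ : 1 ≤ n₁) (hn₀ : 1 ≤ n₀)
    (hsum : n₁ + n₀ = n) (Y1 Y0 : Fin n → ℝ) (w : Fin n → Fin J → ℝ)
    (x : Fin n → Fin K → ℝ) (hx : ∀ k, ∑ i, x i k = 0)
    (hSw : IsUnit (covMat n J J w w).det)
    (B₁ : Matrix (Fin K) (Fin J) ℝ) (hB : ∀ i, x i = B₁ *ᵥ w i)
    (γt : Fin J → ℝ)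
    (hγt : γt = (Vmat n n₁ n₀ J J w w)⁻¹ *ᵥ VvecTau n n₁ n₀ J w Y1 Y0) :
    ((Vmat n n₁ n₀ J K w x)ᵀ *ᵥ γt = VvecTau n n₁ n₀ K x Y1 Y0) ∧
      (∀ k, crCov n n₁ (fun s => tauHatVec n n₁ n₀ K x s k)
          (fun s => tauHat n n₁ n₀ Y1 Y0 s - γt ⬝ᵥ tauHatVec n n₁ n₀ J w s) = 0) ∧
      Vtt n n₁ n₀ Y1 Y0 - VvecTau n n₁ n₀ K x Y1 Y0 ⬝ᵥ
          ((Vmat n n₁ n₀ K K x x)⁻¹ *ᵥ VvecTau n n₁ n₀ K x Y1 Y0)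
        = (Vtt n n₁ n₀ Y1 Y0 - VvecTau n n₁ n₀ J w Y1 Y0 ⬝ᵥ
              ((Vmat n n₁ n₀ J J w w)⁻¹ *ᵥ VvecTau n n₁ n₀ J w Y1 Y0))
          + γt ⬝ᵥ ((Vmat n n₁ n₀ J J w w -
              Vmat n n₁ n₀ J K w x * (Vmat n n₁ n₀ K K x x)⁻¹ *
                (Vmat n n₁ n₀ J K w x)ᵀ) *ᵥ γt) := by
  obtain rfl : x = fun i => B₁ *ᵥ w i := funext hB
  have hW : IsUnit (Vmat n n₁ n₀ J J w w).det :=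
    isUnit_det_Vmat (by omega) (by omega) (by omega) hSw
  have hWγ : Vmat n n₁ n₀ J J w w *ᵥ γt = VvecTau n n₁ n₀ J w Y1 Y0 := by
    rw [hγt, mulVec_mulVec, mul_nonsing_inv _ hW, one_mulVec]
  have hWsymm := Vmat_transpose (n₁ := n₁) (n₀ := n₀) w w
  have hVxw : (Vmat n n₁ n₀ J K w fun i => B₁ *ᵥ w i)ᵀ *ᵥ γt =
      VvecTau n n₁ n₀ K (fun i => B₁ *ᵥ w i) Y1 Y0 := by
    rw [Vmat_mulVec_right, transpose_mul, transpose_transpose, hWsymm, ← mulVec_mulVec, hWγ,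
      VvecTau_mulVec]
  refine ⟨hVxw, fun k => ?_, ?_⟩
  · have hres := congrFun (VvecTau_sub_dotProduct hsum (by omega) (by omega) hx Y1 Y0 w γt) k
    rw [hVxw, sub_self, Pi.zero_apply, VvecTau_apply_of_sum_eq_zero (hx k)] at hres
    have hscale : (n : ℝ) * ((n : ℝ) - 1)⁻¹ ≠ 0 := by
      have : (2 : ℝ) ≤ n := by exact_mod_cast hn
      exact mul_ne_zero (by positivity) (inv_ne_zero (by linarith))
    rw [funext (tauHat_sub_dotProduct_tauHatVec Y1 Y0 w γt)]
    exact crCov_tauHat_eq_zero (hx k) ((mul_eq_zero.1 hres).resolve_left hscale)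
  · rw [Vmat_mulVec_right w w B₁, VvecTau_mulVec, dotProduct_sub_mul_mulVec hWsymm B₁ _ hWγ, ← hγt]
    ring

/-- algebraic content of Corollary 3: if `x_i = B₁ w_i` for all `i`,
then (a) `V_xw γ̃ = V_xτ`, equivalently `Cov(τ̂_x, τ̂ − γ̃ᵀτ̂_w) = 0`, and
(b) `V_ττ − V_τx V_xx⁻¹ V_xτ
    = (V_ττ − V_τw V_ww⁻¹ V_wτ) + γ̃ᵀ(V_ww − V_wx V_xx⁻¹ V_xw)γ̃`. -/
theorem statement11 (n n₁ n₀ J K : ℕ) (hn : 2 ≤ n) (hn₁ : 1 ≤ n₁) (hn₀ : 1 ≤ n₀)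
    (hsum : n₁ + n₀ = n) (Y1 Y0 : Fin n → ℝ) (w : Fin n → Fin J → ℝ)
    (x : Fin n → Fin K → ℝ) (hw : ∀ j, ∑ i, w i j = 0) (hx : ∀ k, ∑ i, x i k = 0)
    (hSw : IsUnit (covMat n J J w w).det) (hSx : IsUnit (covMat n K K x x).det)
    (B₁ : Matrix (Fin K) (Fin J) ℝ) (hB : ∀ i, x i = B₁ *ᵥ w i)
    (γt : Fin J → ℝ)
    (hγt : γt = (Vmat n n₁ n₀ J J w w)⁻¹ *ᵥ VvecTau n n₁ n₀ J w Y1 Y0) :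
    ((Vmat n n₁ n₀ J K w x)ᵀ *ᵥ γt = VvecTau n n₁ n₀ K x Y1 Y0) ∧
      (∀ k, crCov n n₁ (fun s => tauHatVec n n₁ n₀ K x s k)
          (fun s => tauHat n n₁ n₀ Y1 Y0 s - γt ⬝ᵥ tauHatVec n n₁ n₀ J w s) = 0) ∧
      Vtt n n₁ n₀ Y1 Y0 - VvecTau n n₁ n₀ K x Y1 Y0 ⬝ᵥ
          ((Vmat n n₁ n₀ K K x x)⁻¹ *ᵥ VvecTau n n₁ n₀ K x Y1 Y0)
        = (Vtt n n₁ n₀ Y1 Y0 - VvecTau n n₁ n₀ J w Y1 Y0 ⬝ᵥ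
              ((Vmat n n₁ n₀ J J w w)⁻¹ *ᵥ VvecTau n n₁ n₀ J w Y1 Y0))
          + γt ⬝ᵥ ((Vmat n n₁ n₀ J J w w -
              Vmat n n₁ n₀ J K w x * (Vmat n n₁ n₀ K K x x)⁻¹ *
                (Vmat n n₁ n₀ J K w x)ᵀ) *ᵥ γt) :=
  statement11_general n n₁ n₀ J K hn hn₁ hn₀ hsum Y1 Y0 w x hx hSw B₁ hB γt hγt
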